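/- For every n ≥ 2 and every r ≥ 2, L_{≥r}(n) = {λ ⊢ n : s(λ) ≥ r or t(λ) ≥ r}; moreover, for every r ≥ 1, L_r(n) = {λ ⊢ n : max(1, s(λ), t(λ)) = r}. -/

import Mathlib

/-!  Common definitions: the partition graph `Gₙ`, local simplex dimension,
simplex layers, corners, transfers, capacities, and phase boundaries. -/

/-- Vertices of the partition graph: partitions of `n`, encoded as
Young diagrams with `n` cells. -/
abbrev PartitionVertex (n : ℕ) := {μ : YoungDiagram // μ.card = n}

/-- The partition graph `Gₙ`: two distinct partitions of `n` are adjacent iff the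
Young diagram of one is obtained from the other by removing one cell and adding one cell. -/
def partitionGraph (n : ℕ) : SimpleGraph (PartitionVertex n) where
  Adj μ ν := μ ≠ ν ∧ (μ.1.cells \ ν.1.cells).card = 1 ∧ (ν.1.cells \ μ.1.cells).card = 1
  symm := ⟨fun _ _ ⟨h, h1, h2⟩ => ⟨h.symm, h2, h1⟩⟩
  loopless := ⟨fun _ ⟨h, _⟩ => h rfl⟩

/-- `dimLoc n lam` : the largest `d` such that some clique of `Gₙ` of cardinality `d+1`
contains `lam`. -/
noncomputable def dimLoc (n : ℕ) (lam : PartitionVertex n) : ℕ :=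
  sSup {d : ℕ | ∃ s : Finset (PartitionVertex n),
    (partitionGraph n).IsClique (↑s : Set (PartitionVertex n)) ∧ s.card = d + 1 ∧ lam ∈ s}

/-- The simplex layer `L_r(n)`. -/
def layer (n r : ℕ) : Set (PartitionVertex n) := {lam | dimLoc n lam = r}

/-- The upper simplex layer `L_{≥ r}(n)`. -/
def layerGe (n r : ℕ) : Set (PartitionVertex n) := {lam | r ≤ dimLoc n lam}

/-- `Δ(n)` : the maximal local simplex dimension over all partitions of `n`. -/
noncomputable def Delta (n : ℕ) : ℕ := ⨆ lam : PartitionVertex n, dimLoc n lam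

/-- `c` is a removable corner of the Young diagram `μ`. -/
def Removable (μ : YoungDiagram) (c : ℕ × ℕ) : Prop :=
  c ∈ μ.cells ∧ IsLowerSet (↑(μ.cells.erase c) : Set (ℕ × ℕ))

/-- `a` is an addable corner of the Young diagram `μ`. -/
def Addable (μ : YoungDiagram) (a : ℕ × ℕ) : Prop :=
  a ∉ μ.cells ∧ IsLowerSet (↑(insert a μ.cells) : Set (ℕ × ℕ))

/-- The cells of `λ(c→a)`: remove the cell `c` and add the cell `a`. -/
def transferCells (μ : YoungDiagram) (c a : ℕ × ℕ) : Finset (ℕ × ℕ) :=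
  insert a (μ.cells.erase c)

/-- The transfer `λ(c→a)` is admissible: the result is again a Young diagram
and is different from `λ`. -/
def Admissible (μ : YoungDiagram) (c a : ℕ × ℕ) : Prop :=
  IsLowerSet (↑(transferCells μ c a) : Set (ℕ × ℕ)) ∧ transferCells μ c a ≠ μ.cells

/-- `A_max(λ,c)`: the addable corners `a` for which `λ(c→a)` is admissible. -/
def Amax (μ : YoungDiagram) (c : ℕ × ℕ) : Set (ℕ × ℕ) :=
  {a | Addable μ a ∧ Admissible μ c a}

/-- `C_max(λ,a)`: the removable corners `c` for which `λ(c→a)` is admissible. -/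
def Cmax (μ : YoungDiagram) (a : ℕ × ℕ) : Set (ℕ × ℕ) :=
  {c | Removable μ c ∧ Admissible μ c a}

/-- The full star-simplex `Σ^star_max(λ,c) = {λ} ∪ {λ(c→a) : a ∈ A_max(λ,c)}`,
as a set of vertices of `Gₙ`. -/
def starSimplex (n : ℕ) (lam : PartitionVertex n) (c : ℕ × ℕ) : Set (PartitionVertex n) :=
  {ν | ν = lam ∨ ∃ a ∈ Amax lam.1 c, ν.1.cells = transferCells lam.1 c a}

/-- The full top-simplex `Σ^top_max(λ,a) = {λ} ∪ {λ(c→a) : c ∈ C_max(λ,a)}`,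
as a set of vertices of `Gₙ`. -/
def topSimplex (n : ℕ) (lam : PartitionVertex n) (a : ℕ × ℕ) : Set (PartitionVertex n) :=
  {ν | ν = lam ∨ ∃ c ∈ Cmax lam.1 a, ν.1.cells = transferCells lam.1 c a}

/-- The star capacity `s(λ) = max over removable corners c of |A_max(λ,c)|`. -/
noncomputable def starCap (μ : YoungDiagram) : ℕ :=
  sSup {k | ∃ c : ℕ × ℕ, Removable μ c ∧ (Amax μ c).ncard = k}

/-- The top capacity `t(λ) = max over addable corners a of |C_max(λ,a)|`. -/
noncomputable def topCap (μ : YoungDiagram) : ℕ :=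
  sSup {k | ∃ a : ℕ × ℕ, Addable μ a ∧ (Cmax μ a).ncard = k}

/-! Two neighbours `λ(c→a)` and `λ(c'→a')` of `λ` differ in `[a ≠ a'] + [c ≠ c']` cells, so
they are adjacent exactly when the pairs `(c, a)` and `(c', a')` are distinct and share a
coordinate. Pairs that pairwise share a coordinate all share the same one, so a clique through `λ`
consists of `λ` and transfers out of a single corner `c` or into a single corner `a`; the star and
top simplices show that both bounds are attained, whence `dim_loc λ = max (s λ) (t λ)`. For
`n ≥ 2` some removable corner is not below some addable corner, so `s λ ≥ 1`. -/

open Finset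

theorem Set.Pairwise.forall_fst_eq_or_forall_snd_eq {α β : Type*} {P : Set (α × β)}
    (hP : P.Pairwise fun p q => p.1 = q.1 ∨ p.2 = q.2) {p₀ : α × β} (hp₀ : p₀ ∈ P) :
    (∀ p ∈ P, p.1 = p₀.1) ∨ (∀ p ∈ P, p.2 = p₀.2) := by
  by_contra! ⟨⟨q, hq, hq₁⟩, ⟨p, hp, hp₂⟩⟩
  -- `q` meets `p₀` only in the second coordinate and `p` only in the first, so they share none.
  have hqp₀ : q.2 = p₀.2 := (hP hq hp₀ fun h => hq₁ (h ▸ rfl)).resolve_left hq₁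
  have hpp₀ : p.1 = p₀.1 := (hP hp hp₀ fun h => hp₂ (h ▸ rfl)).resolve_right hp₂
  have hpq : p ≠ q := fun h => hq₁ (h ▸ hpp₀)
  rcases hP hp hq hpq with h | h
  · exact hq₁ (h ▸ hpp₀)
  · exact hp₂ (h ▸ hqp₀)

section Transfer

variable {μ : YoungDiagram} {c c' a a' : ℕ × ℕ}

theorem mem_transferCells {x : ℕ × ℕ} :
    x ∈ transferCells μ c a ↔ x = a ∨ x ≠ c ∧ x ∈ μ := by
  simp [transferCells]

theorem cells_sdiff_transferCells (ha : a ∉ μ) (hc : c ∈ μ) :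
    μ.cells \ transferCells μ c a = {c} := by
  ext x
  simp only [mem_sdiff, YoungDiagram.mem_cells, mem_transferCells, mem_singleton]
  constructor
  · rintro ⟨hx, hx'⟩
    by_contra hxc
    exact hx' (Or.inr ⟨hxc, hx⟩)
  · rintro rfl
    exact ⟨hc, by rintro (rfl | ⟨h, -⟩) <;> contradiction⟩

theorem transferCells_sdiff_cells (ha : a ∉ μ) :
    transferCells μ c a \ μ.cells = {a} := by
  ext x
  simp only [mem_sdiff, YoungDiagram.mem_cells, mem_transferCells, mem_singleton]
  constructor
  · rintro ⟨hx | ⟨-, hx⟩, hx'⟩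
    · exact hx
    · exact absurd hx hx'
  · rintro rfl
    exact ⟨Or.inl rfl, ha⟩

theorem transferCells_sdiff_transferCells (ha : a ∉ μ) (hc' : c' ∈ μ) (ha' : a' ∉ μ) :
    transferCells μ c a \ transferCells μ c' a' = ({a} \ {a'}) ∪ ({c'} \ {c}) := by
  ext x
  simp only [mem_sdiff, mem_union, mem_singleton, mem_transferCells]
  constructor
  · rintro ⟨rfl | ⟨hxc, hx⟩, hx'⟩
    · exact Or.inl ⟨rfl, fun h => hx' (Or.inl h)⟩
    · exact Or.inr ⟨by_contra fun h => hx' (Or.inr ⟨h, hx⟩), hxc⟩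
  · rintro (⟨rfl, hxa'⟩ | ⟨rfl, hxc⟩)
    · exact ⟨Or.inl rfl, by rintro (h | ⟨-, h⟩) <;> contradiction⟩
    · exact ⟨Or.inr ⟨hxc, hc'⟩, by rintro (rfl | ⟨h, -⟩) <;> contradiction⟩

theorem card_transferCells_sdiff_transferCells (ha : a ∉ μ) (hc' : c' ∈ μ) (ha' : a' ∉ μ) :
    (transferCells μ c a \ transferCells μ c' a').card =
      (if a = a' then 0 else 1) + (if c' = c then 0 else 1) := by
  have hdisj : Disjoint ({a} \ {a'} : Finset (ℕ × ℕ)) ({c'} \ {c}) := by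
    simp only [disjoint_left, mem_sdiff, mem_singleton]
    rintro x ⟨rfl, -⟩ ⟨rfl, -⟩
    exact ha hc'
  rw [transferCells_sdiff_transferCells ha hc' ha', card_union_of_disjoint hdisj]
  split_ifs <;> grind

theorem transferCells_injOn :
    Set.InjOn (fun p : (ℕ × ℕ) × (ℕ × ℕ) => transferCells μ p.1 p.2)
      {p | p.1 ∈ μ ∧ p.2 ∉ μ} := by
  rintro ⟨c, a⟩ ⟨hc, ha⟩ ⟨c', a'⟩ ⟨hc', ha'⟩ h
  have hcard := card_transferCells_sdiff_transferCells (c := c) ha hc' ha'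
  rw [show transferCells μ c a = transferCells μ c' a' from h, sdiff_self, bot_eq_empty,
    card_empty] at hcard
  split_ifs at hcard <;> simp_all

theorem card_transferCells (ha : a ∉ μ) (hc : c ∈ μ) : (transferCells μ c a).card = μ.card := by
  have hpos : 0 < μ.cells.card := card_pos.mpr ⟨c, hc⟩
  rw [YoungDiagram.card, transferCells, card_insert_of_notMem fun h => ha (mem_of_mem_erase h),
    card_erase_of_mem hc]
  omega

end Transfer

section Corners

variable {μ : YoungDiagram} {c a x : ℕ × ℕ}

theorem removable_of_forall_not_lt (hc : c ∈ μ) (hmax : ∀ y ∈ μ, ¬c < y) : Removable μ c := by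
  refine ⟨hc, fun y x hxy hy => ?_⟩
  simp only [coe_erase, Set.mem_sdiff, mem_coe, YoungDiagram.mem_cells,
    Set.mem_singleton_iff] at hy ⊢
  refine ⟨μ.isLowerSet hxy hy.1, ?_⟩
  rintro rfl
  exact hmax y hy.1 (lt_of_le_of_ne hxy (Ne.symm hy.2))

theorem addable_of_forall_lt (ha : a ∉ μ) (hmin : ∀ x < a, x ∈ μ) : Addable μ a := by
  refine ⟨ha, fun y x hxy hy => ?_⟩
  simp only [coe_insert, Set.mem_insert_iff, mem_coe, YoungDiagram.mem_cells] at hy ⊢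
  rcases hy with rfl | hy
  · exact (eq_or_lt_of_le hxy).imp id (hmin x)
  · exact Or.inr (μ.isLowerSet hxy hy)

theorem Addable.mem_of_lt (ha : Addable μ a) (hx : x < a) : x ∈ μ := by
  simpa [hx.ne] using ha.2 hx.le (mem_insert_self a μ.cells)

theorem Addable.le_colLen_rowLen (ha : Addable μ a) : a ≤ (μ.colLen 0, μ.rowLen 0) := by
  obtain ⟨i, j⟩ := a
  constructor
  · rcases i with _ | i
    · exact Nat.zero_le _
    · have := ha.mem_of_lt (Prod.mk_lt_mk_iff_left.mpr (Nat.lt_succ_self i) : (i, j) < _)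
      exact YoungDiagram.mem_iff_lt_colLen.mp (μ.up_left_mem le_rfl (Nat.zero_le j) this)
  · rcases j with _ | j
    · exact Nat.zero_le _
    · have := ha.mem_of_lt (Prod.mk_lt_mk_iff_right.mpr (Nat.lt_succ_self j) : (i, j) < _)
      exact YoungDiagram.mem_iff_lt_rowLen.mp (μ.up_left_mem (Nat.zero_le i) le_rfl this)

theorem finite_setOf_addable (μ : YoungDiagram) : {a | Addable μ a}.Finite :=
  (Set.finite_Iic _).subset fun _ ha => Addable.le_colLen_rowLen ha

theorem finite_Amax (μ : YoungDiagram) (c : ℕ × ℕ) : (Amax μ c).Finite :=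
  (finite_setOf_addable μ).subset fun _ ha => ha.1

theorem finite_Cmax (μ : YoungDiagram) (a : ℕ × ℕ) : (Cmax μ a).Finite :=
  μ.cells.finite_toSet.subset fun _ hc => hc.1.1

end Corners

def transferPairs (μ : YoungDiagram) : Set ((ℕ × ℕ) × (ℕ × ℕ)) :=
  {p | Removable μ p.1 ∧ p.2 ∈ Amax μ p.1}

theorem finite_transferPairs (μ : YoungDiagram) : (transferPairs μ).Finite :=
  (μ.cells.finite_toSet.prod (finite_setOf_addable μ)).subset fun _ hp => ⟨hp.1.1, hp.2.1⟩

theorem transferPairs_subset (μ : YoungDiagram) :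
    transferPairs μ ⊆ {p | p.1 ∈ μ ∧ p.2 ∉ μ} :=
  fun _ hp => ⟨hp.1.1, hp.2.1.1⟩

section Vertices

variable {n : ℕ} {lam ν ν' : PartitionVertex n} {p q : (ℕ × ℕ) × (ℕ × ℕ)}

theorem cells_injective (n : ℕ) : Function.Injective fun ν : PartitionVertex n => ν.1.cells :=
  fun _ _ h => Subtype.ext (YoungDiagram.ext h)

theorem exists_cells_eq_transferCells (hp : p ∈ transferPairs lam.1) :
    ∃ ν : PartitionVertex n, ν.1.cells = transferCells lam.1 p.1 p.2 :=
  ⟨⟨⟨_, hp.2.2.1⟩, (card_transferCells hp.2.1.1 hp.1.1).trans lam.2⟩, rfl⟩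

theorem exists_transferPairs_of_adj (h : (partitionGraph n).Adj lam ν) :
    ∃ p ∈ transferPairs lam.1, ν.1.cells = transferCells lam.1 p.1 p.2 := by
  obtain ⟨hne, hc, ha⟩ := h
  obtain ⟨c, hc⟩ := card_eq_one.mp hc
  obtain ⟨a, ha⟩ := card_eq_one.mp ha
  have hcells : ∀ x, x ∈ lam.1 ∧ x ∉ ν.1 ↔ x = c := fun x => by
    simpa using Finset.ext_iff.mp hc x
  have hcells' : ∀ x, x ∈ ν.1 ∧ x ∉ lam.1 ↔ x = a := fun x => by
    simpa using Finset.ext_iff.mp ha x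
  have hν : ν.1.cells = transferCells lam.1 c a := by
    ext x
    simp only [YoungDiagram.mem_cells, mem_transferCells]
    grind
  have herase : lam.1.cells.erase c = lam.1.cells ∩ ν.1.cells := by
    ext x
    simp only [mem_erase, mem_inter, YoungDiagram.mem_cells]
    grind
  have hinsert : insert a lam.1.cells = lam.1.cells ∪ ν.1.cells := by
    ext x
    simp only [mem_insert, mem_union, YoungDiagram.mem_cells]
    grind
  refine ⟨(c, a), ⟨⟨((hcells c).mpr rfl).1, ?_⟩, ⟨((hcells' a).mpr rfl).2, ?_⟩, ?_, ?_⟩, hν⟩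
  · rw [herase, coe_inter]
    exact lam.1.isLowerSet.inter ν.1.isLowerSet
  · rw [hinsert, coe_union]
    exact lam.1.isLowerSet.union ν.1.isLowerSet
  · rw [← hν]
    exact ν.1.isLowerSet
  · rw [← hν]
    exact fun h => hne (cells_injective n h).symm

theorem adj_of_cells_eq_transferCells (hp : p ∈ transferPairs lam.1)
    (hν : ν.1.cells = transferCells lam.1 p.1 p.2) : (partitionGraph n).Adj lam ν := by
  refine ⟨fun h => hp.2.2.2 (by rw [← hν, h]), ?_, ?_⟩
  · rw [hν, cells_sdiff_transferCells hp.2.1.1 hp.1.1, card_singleton]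
  · rw [hν, transferCells_sdiff_cells hp.2.1.1, card_singleton]

theorem adj_iff_of_cells_eq_transferCells (hp : p ∈ transferPairs lam.1)
    (hq : q ∈ transferPairs lam.1) (hν : ν.1.cells = transferCells lam.1 p.1 p.2)
    (hν' : ν'.1.cells = transferCells lam.1 q.1 q.2) :
    (partitionGraph n).Adj ν ν' ↔ p ≠ q ∧ (p.1 = q.1 ∨ p.2 = q.2) := by
  have hne : ν ≠ ν' ↔ p ≠ q := by
    refine not_congr ⟨fun h => transferCells_injOn (transferPairs_subset _ hp)
      (transferPairs_subset _ hq) ?_, fun h => cells_injective n ?_⟩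
    · simp only [← hν, ← hν', h]
    · simp only [hν, hν', h]
  change ν ≠ ν' ∧ _ ∧ _ ↔ _
  rw [hne, hν, hν', card_transferCells_sdiff_transferCells hp.2.1.1 hq.1.1 hq.2.1.1,
    card_transferCells_sdiff_transferCells hq.2.1.1 hp.1.1 hp.2.1.1]
  obtain ⟨c, a⟩ := p
  obtain ⟨c', a'⟩ := q
  simp only [ne_eq, Prod.mk.injEq]
  split_ifs <;> grind

end Vertices

/-- The star and top simplices are the cases `P = {c} ×ˢ A_max(λ,c)` and
`P = C_max(λ,a) ×ˢ {a}`. -/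
def transferSimplex {n : ℕ} (lam : PartitionVertex n) (P : Set ((ℕ × ℕ) × (ℕ × ℕ))) :
    Set (PartitionVertex n) :=
  {ν | ν = lam ∨ ∃ p ∈ P, ν.1.cells = transferCells lam.1 p.1 p.2}

section Simplices

variable {n : ℕ} {lam : PartitionVertex n} {P : Set ((ℕ × ℕ) × (ℕ × ℕ))}

theorem isClique_transferSimplex (hP : P ⊆ transferPairs lam.1)
    (hshare : P.Pairwise fun p q => p.1 = q.1 ∨ p.2 = q.2) :
    (partitionGraph n).IsClique (transferSimplex lam P) := by
  rintro ν (rfl | ⟨p, hp, hν⟩) ν' (rfl | ⟨q, hq, hν'⟩) hne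
  · exact absurd rfl hne
  · exact adj_of_cells_eq_transferCells (hP hq) hν'
  · exact (adj_of_cells_eq_transferCells (hP hp) hν).symm
  · have hpq : p ≠ q := by
      rintro rfl
      exact hne (cells_injective n (hν.trans hν'.symm))
    exact (adj_iff_of_cells_eq_transferCells (hP hp) (hP hq) hν hν').mpr ⟨hpq, hshare hp hq hpq⟩

theorem ncard_transferSimplex (hP : P ⊆ transferPairs lam.1) :
    (transferSimplex lam P).ncard = P.ncard + 1 := by
  have himage : (fun ν : PartitionVertex n => ν.1.cells) '' transferSimplex lam P =
      insert lam.1.cells ((fun p => transferCells lam.1 p.1 p.2) '' P) := by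
    ext s
    constructor
    · rintro ⟨ν, rfl | ⟨p, hp, hν⟩, rfl⟩
      · exact Set.mem_insert _ _
      · exact Set.mem_insert_of_mem _ ⟨p, hp, hν.symm⟩
    · rintro (rfl | ⟨p, hp, rfl⟩)
      · exact ⟨lam, Or.inl rfl, rfl⟩
      · obtain ⟨ν, hν⟩ := exists_cells_eq_transferCells (hP hp)
        exact ⟨ν, Or.inr ⟨p, hp, hν⟩, hν⟩
  have hlam : lam.1.cells ∉ (fun p => transferCells lam.1 p.1 p.2) '' P := by
    rintro ⟨p, hp, h⟩
    exact (hP hp).2.2.2 h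
  have hinj : Set.InjOn (fun p => transferCells lam.1 p.1 p.2) P :=
    transferCells_injOn.mono (hP.trans (transferPairs_subset _))
  have hfin : ((fun p => transferCells lam.1 p.1 p.2) '' P).Finite :=
    ((finite_transferPairs _).subset hP).image _
  rw [← Set.ncard_image_of_injective _ (cells_injective n), himage,
    Set.ncard_insert_of_notMem hlam hfin, hinj.ncard_image]

theorem finite_transferSimplex (hP : P ⊆ transferPairs lam.1) :
    (transferSimplex lam P).Finite :=
  Set.finite_of_ncard_ne_zero (by rw [ncard_transferSimplex hP]; omega)

end Simplices

section Capacities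

variable {μ : YoungDiagram} {c a : ℕ × ℕ}

theorem le_starCap (hc : Removable μ c) : (Amax μ c).ncard ≤ starCap μ :=
  le_csSup ⟨{a | Addable μ a}.ncard, by
    rintro _ ⟨c', -, rfl⟩
    exact Set.ncard_le_ncard (fun a (ha : a ∈ Amax μ c') => ha.1) (finite_setOf_addable μ)⟩
    ⟨c, hc, rfl⟩

theorem le_topCap (ha : Addable μ a) : (Cmax μ a).ncard ≤ topCap μ :=
  le_csSup ⟨μ.cells.card, by
    rintro _ ⟨a', -, rfl⟩
    rw [← Set.ncard_coe_finset]
    exact Set.ncard_le_ncard (fun c (hc : c ∈ Cmax μ a') => hc.1.1) μ.cells.finite_toSet⟩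
    ⟨a, ha, rfl⟩

theorem ncard_le_max_starCap_topCap {Q : Set ((ℕ × ℕ) × (ℕ × ℕ))} (hQ : Q ⊆ transferPairs μ)
    (hshare : Q.Pairwise fun p q => p.1 = q.1 ∨ p.2 = q.2) :
    Q.ncard ≤ max (starCap μ) (topCap μ) := by
  obtain rfl | ⟨p₀, hp₀⟩ := Q.eq_empty_or_nonempty
  · simp
  rcases hshare.forall_fst_eq_or_forall_snd_eq hp₀ with hfst | hsnd
  · calc Q.ncard ≤ ({p₀.1} ×ˢ Amax μ p₀.1).ncard :=
          Set.ncard_le_ncard (fun p hp => ⟨hfst p hp, hfst p hp ▸ (hQ hp).2⟩)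
            ((Set.finite_singleton _).prod (finite_Amax μ _))
      _ = (Amax μ p₀.1).ncard := by rw [Set.ncard_prod, Set.ncard_singleton, one_mul]
      _ ≤ max (starCap μ) (topCap μ) := (le_starCap (hQ hp₀).1).trans (le_max_left _ _)
  · calc Q.ncard ≤ (Cmax μ p₀.2 ×ˢ {p₀.2}).ncard :=
          Set.ncard_le_ncard (fun p hp => ⟨hsnd p hp ▸ ⟨(hQ hp).1, (hQ hp).2.2⟩, hsnd p hp⟩)
            ((finite_Cmax μ _).prod (Set.finite_singleton _))
      _ = (Cmax μ p₀.2).ncard := by rw [Set.ncard_prod, Set.ncard_singleton, mul_one]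
      _ ≤ max (starCap μ) (topCap μ) := (le_topCap (hQ hp₀).2.1).trans (le_max_right _ _)

end Capacities

section LocalDimension

variable {n : ℕ} {lam : PartitionVertex n}

theorem exists_subset_transferSimplex_of_isClique {s : Set (PartitionVertex n)}
    (hs : (partitionGraph n).IsClique s) (hlam : lam ∈ s) :
    ∃ Q ⊆ transferPairs lam.1, (Q.Pairwise fun p q => p.1 = q.1 ∨ p.2 = q.2) ∧
      s ⊆ transferSimplex lam Q := by
  refine ⟨{p | p ∈ transferPairs lam.1 ∧ ∃ ν ∈ s, ν.1.cells = transferCells lam.1 p.1 p.2},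
    fun p hp => hp.1, ?_, ?_⟩
  · rintro p ⟨hp, ν, hν, hνp⟩ q ⟨hq, ν', hν', hν'q⟩ hpq
    have hne : ν ≠ ν' := by
      rintro rfl
      exact hpq (transferCells_injOn (transferPairs_subset _ hp) (transferPairs_subset _ hq)
        (hνp.symm.trans hν'q))
    exact ((adj_iff_of_cells_eq_transferCells hp hq hνp hν'q).mp (hs hν hν' hne)).2
  · intro ν hν
    by_cases h : ν = lam
    · exact Or.inl h
    · obtain ⟨p, hp, hνp⟩ := exists_transferPairs_of_adj (hs hlam hν (Ne.symm h))
      exact Or.inr ⟨p, ⟨hp, ν, hν, hνp⟩, hνp⟩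

theorem card_le_of_isClique {s : Finset (PartitionVertex n)}
    (hs : (partitionGraph n).IsClique (s : Set (PartitionVertex n))) (hlam : lam ∈ s) :
    s.card ≤ max (starCap lam.1) (topCap lam.1) + 1 := by
  obtain ⟨Q, hQ, hshare, hsub⟩ := exists_subset_transferSimplex_of_isClique hs hlam
  have hfin := finite_transferSimplex hQ
  calc s.card = (s : Set (PartitionVertex n)).ncard := (Set.ncard_coe_finset s).symm
    _ ≤ (transferSimplex lam Q).ncard := Set.ncard_le_ncard hsub hfin
    _ = Q.ncard + 1 := ncard_transferSimplex hQ
    _ ≤ max (starCap lam.1) (topCap lam.1) + 1 :=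
      Nat.add_le_add_right (ncard_le_max_starCap_topCap hQ hshare) 1

theorem dimLoc_le : dimLoc n lam ≤ max (starCap lam.1) (topCap lam.1) :=
  csSup_le' fun _ ⟨_, hs, hcard, hlam⟩ => by
    have := card_le_of_isClique hs hlam
    omega

theorem le_dimLoc {P : Set ((ℕ × ℕ) × (ℕ × ℕ))} (hP : P ⊆ transferPairs lam.1)
    (hshare : P.Pairwise fun p q => p.1 = q.1 ∨ p.2 = q.2) : P.ncard ≤ dimLoc n lam := by
  have hfin := finite_transferSimplex hP
  refine le_csSup ⟨max (starCap lam.1) (topCap lam.1), fun _ ⟨_, hs, hcard, hlam⟩ => ?_⟩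
    ⟨hfin.toFinset, ?_, ?_, hfin.mem_toFinset.mpr (Or.inl rfl)⟩
  · have := card_le_of_isClique hs hlam
    omega
  · rw [hfin.coe_toFinset]
    exact isClique_transferSimplex hP hshare
  · rw [← Set.ncard_eq_toFinset_card _ hfin, ncard_transferSimplex hP]

theorem starCap_le_dimLoc : starCap lam.1 ≤ dimLoc n lam := by
  refine csSup_le' fun _ ⟨c, hc, hk⟩ => hk ▸ ?_
  have hP : {c} ×ˢ Amax lam.1 c ⊆ transferPairs lam.1 := by
    rintro ⟨c', a⟩ ⟨rfl, ha⟩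
    exact ⟨hc, ha⟩
  have h := le_dimLoc hP fun p hp q hq _ => Or.inl (hp.1.trans hq.1.symm)
  rwa [Set.ncard_prod, Set.ncard_singleton, one_mul] at h

theorem topCap_le_dimLoc : topCap lam.1 ≤ dimLoc n lam := by
  refine csSup_le' fun _ ⟨a, ha, hk⟩ => hk ▸ ?_
  have hP : Cmax lam.1 a ×ˢ {a} ⊆ transferPairs lam.1 := by
    rintro ⟨c, a'⟩ ⟨hc, rfl⟩
    exact ⟨hc.1, ha, hc.2⟩
  have h := le_dimLoc hP fun p hp q hq _ => Or.inr (hp.2.trans hq.2.symm)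
  rwa [Set.ncard_prod, Set.ncard_singleton, mul_one] at h

theorem dimLoc_eq_max_starCap_topCap : dimLoc n lam = max (starCap lam.1) (topCap lam.1) :=
  dimLoc_le.antisymm (max_le starCap_le_dimLoc topCap_le_dimLoc)

end LocalDimension

section Existence

variable {μ : YoungDiagram} {c a : ℕ × ℕ}

theorem admissible_of_not_le (hc : Removable μ c) (ha : Addable μ a) (hca : ¬c ≤ a) :
    Admissible μ c a := by
  refine ⟨fun y x hxy hy => ?_, fun h => ha.1 (h ▸ mem_insert_self a _)⟩
  simp only [mem_coe, mem_transferCells] at hy ⊢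
  rcases hy with rfl | ⟨hyc, hy⟩
  · rcases eq_or_lt_of_le hxy with rfl | hlt
    · exact Or.inl rfl
    · exact Or.inr ⟨by rintro rfl; exact hca hxy, ha.mem_of_lt hlt⟩
  · have := hc.2 hxy (by simp [hyc, hy] : y ∈ (↑(μ.cells.erase c) : Set (ℕ × ℕ)))
    simp only [coe_erase, Set.mem_sdiff, mem_coe, YoungDiagram.mem_cells,
      Set.mem_singleton_iff] at this
    exact Or.inr ⟨this.2, this.1⟩

theorem addable_zero_rowLen (μ : YoungDiagram) : Addable μ (0, μ.rowLen 0) := by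
  refine addable_of_forall_lt (fun h => (YoungDiagram.mem_iff_lt_rowLen.mp h).false) ?_
  rintro ⟨i, j⟩ hx
  rcases Prod.lt_iff.mp hx with ⟨hi, -⟩ | ⟨hi, hj⟩
  · exact absurd hi (Nat.not_lt_zero i)
  · obtain rfl := Nat.le_zero.mp hi
    exact YoungDiagram.mem_iff_lt_rowLen.mpr hj

theorem addable_colLen_zero (μ : YoungDiagram) : Addable μ (μ.colLen 0, 0) := by
  refine addable_of_forall_lt (fun h => (YoungDiagram.mem_iff_lt_colLen.mp h).false) ?_
  rintro ⟨i, j⟩ hx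
  rcases Prod.lt_iff.mp hx with ⟨hi, hj⟩ | ⟨-, hj⟩
  · obtain rfl := Nat.le_zero.mp hj
    exact YoungDiagram.mem_iff_lt_colLen.mpr hi
  · exact absurd hj (Nat.not_lt_zero j)

theorem one_le_starCap (hμ : 2 ≤ μ.card) : 1 ≤ starCap μ := by
  obtain ⟨c, hc⟩ := μ.cells.exists_maximal (card_pos.mp (zero_lt_two.trans_le hμ))
  have hrem : Removable μ c := removable_of_forall_not_lt hc.1 fun y hy => hc.not_gt hy
  have hc₀ : c ≠ (0, 0) := by
    rintro rfl
    have : μ.cells ⊆ {(0, 0)} := fun y hy => mem_singleton.mpr (hc.eq_of_ge hy bot_le)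
    simpa using hμ.trans (card_le_card this)
  -- `c ≤ (0, rowLen 0)` forces `c.1 = 0` and `c ≤ (colLen 0, 0)` forces `c.2 = 0`
  obtain ⟨a, ha, hca⟩ : ∃ a, Addable μ a ∧ ¬c ≤ a := by
    by_contra! h
    have h₁ := h _ (addable_zero_rowLen μ)
    have h₂ := h _ (addable_colLen_zero μ)
    exact hc₀ (Prod.ext (Nat.le_zero.mp h₁.1) (Nat.le_zero.mp h₂.2))
  have hpos : 0 < (Amax μ c).ncard :=
    (Set.ncard_pos (finite_Amax μ c)).mpr ⟨a, ha, admissible_of_not_le hrem ha hca⟩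
  exact hpos.trans_le (le_starCap hrem)

end Existence

/-- For every `n ≥ 2` and `r ≥ 2`,
`L_{≥r}(n) = {λ ⊢ n : s(λ) ≥ r or t(λ) ≥ r}`; moreover, for every `r ≥ 1`,
`L_r(n) = {λ ⊢ n : max(1, s(λ), t(λ)) = r}`. -/
theorem layer_capacity_criterion (n : ℕ) (hn : 2 ≤ n) :
    (∀ r : ℕ, 2 ≤ r →
      layerGe n r = {lam : PartitionVertex n | r ≤ starCap lam.1 ∨ r ≤ topCap lam.1}) ∧
    (∀ r : ℕ, 1 ≤ r →
      layer n r = {lam : PartitionVertex n |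
        max 1 (max (starCap lam.1) (topCap lam.1)) = r}) := by
  refine ⟨fun r _ => ?_, fun r _ => ?_⟩
  · ext lam
    simp only [layerGe, Set.mem_ofPred_eq, dimLoc_eq_max_starCap_topCap, le_max_iff]
  · ext lam
    have h1 : 1 ≤ max (starCap lam.1) (topCap lam.1) :=
      (one_le_starCap (lam.2.symm ▸ hn)).trans (le_max_left _ _)
    simp only [layer, Set.mem_ofPred_eq, dimLoc_eq_max_starCap_topCap, max_eq_right h1]
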